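/- Let K be an n×n real symmetric positive-definite matrix, let ρ > 0, and let J be any m×n real matrix. Then the (n+2m)×(n+2m) block matrix M = [[K, 0, Jᵀ], [0, ρIₘ, Iₘ], [J, Iₘ, 0]] is nonsingular. (This is the structure of the search-direction system solved at each interior-point iteration of NCL: the extra residual variables r make the system solvable regardless of the rank of J.) -/

import Mathlib

open Matrix

/-- The (n+2m)×(n+2m) block matrix `M = [[K, 0, Jᵀ], [0, ρI, I], [J, I, 0]]`
arising from the NCL interior-point search-direction system. -/
noncomputable def nclKKTMatrix {n m : ℕ}
    (K : Matrix (Fin n) (Fin n) ℝ) (ρ : ℝ) (J : Matrix (Fin m) (Fin n) ℝ) :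
    Matrix (Fin n ⊕ (Fin m ⊕ Fin m)) (Fin n ⊕ (Fin m ⊕ Fin m)) ℝ :=
  Matrix.of fun p q =>
    match p, q with
    | Sum.inl i, Sum.inl j => K i j
    | Sum.inl _, Sum.inr (Sum.inl _) => 0
    | Sum.inl i, Sum.inr (Sum.inr j) => Jᵀ i j
    | Sum.inr (Sum.inl _), Sum.inl _ => 0
    | Sum.inr (Sum.inl i), Sum.inr (Sum.inl j) => ρ * (1 : Matrix (Fin m) (Fin m) ℝ) i j
    | Sum.inr (Sum.inl i), Sum.inr (Sum.inr j) => (1 : Matrix (Fin m) (Fin m) ℝ) i j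
    | Sum.inr (Sum.inr i), Sum.inl j => J i j
    | Sum.inr (Sum.inr i), Sum.inr (Sum.inl j) => (1 : Matrix (Fin m) (Fin m) ℝ) i j
    | Sum.inr (Sum.inr _), Sum.inr (Sum.inr _) => 0

/-!
If `M (x, r, λ) = 0`, the three block rows say `K x = -Jᵀ λ`, `λ = -ρ r` and `J x = -r`, so
`xᵀ K x = -(J x)ᵀ λ = rᵀ λ = -ρ ‖r‖²`. The left side is `≥ 0` and the right side `≤ 0`, so both
vanish; positive definiteness of `K` and `ρ > 0` give `x = 0` and `r = 0`, hence `λ = 0`.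
-/

section KKT

variable {n m : Type*} [Fintype n] [Fintype m]

theorem kkt_dotProduct_mulVec_eq {R : Type*} [CommRing R] {K : Matrix n n R}
    {J : Matrix m n R} {ρ : R} {x : n → R} {r l : m → R} (hx : K *ᵥ x + Jᵀ *ᵥ l = 0)
    (hr : ρ • r + l = 0) (hl : J *ᵥ x + r = 0) : x ⬝ᵥ K *ᵥ x = -(ρ * (r ⬝ᵥ r)) :=
  calc x ⬝ᵥ K *ᵥ x = -((J *ᵥ x) ⬝ᵥ l) := by
        rw [eq_neg_of_add_eq_zero_left hx, dotProduct_neg, dotProduct_mulVec, vecMul_transpose]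
    _ = r ⬝ᵥ l := by rw [eq_neg_of_add_eq_zero_left hl, neg_dotProduct, neg_neg]
    _ = -(ρ * (r ⬝ᵥ r)) := by
        rw [eq_neg_of_add_eq_zero_right hr, dotProduct_neg, dotProduct_smul, smul_eq_mul]

theorem kkt_eq_zero_of_posDef {R : Type*} [CommRing R] [LinearOrder R] [IsStrictOrderedRing R]
    [StarRing R] [TrivialStar R] {K : Matrix n n R} (hK : K.PosDef) {J : Matrix m n R} {ρ : R}
    (hρ : 0 < ρ) {x : n → R} {r l : m → R} (hx : K *ᵥ x + Jᵀ *ᵥ l = 0)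
    (hr : ρ • r + l = 0) (hl : J *ᵥ x + r = 0) : x = 0 ∧ r = 0 ∧ l = 0 := by
  have hxKx := kkt_dotProduct_mulVec_eq hx hr hl
  have hrr : 0 ≤ r ⬝ᵥ r := Fintype.sum_nonneg fun i => mul_self_nonneg (r i)
  have hx0 : x = 0 := by
    by_contra hx0
    have hpos := hK.dotProduct_mulVec_pos hx0
    rw [star_trivial] at hpos
    nlinarith
  have hr0 : r = 0 := by
    rwa [hx0, zero_dotProduct, zero_eq_neg, mul_eq_zero, or_iff_right hρ.ne',
      dotProduct_self_eq_zero] at hxKx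
  rw [hr0, smul_zero, zero_add] at hr
  exact ⟨hx0, hr0, hr⟩

end KKT

section nclKKTMatrix

variable {n m : ℕ} (K : Matrix (Fin n) (Fin n) ℝ) (ρ : ℝ) (J : Matrix (Fin m) (Fin n) ℝ)
  (v : Fin n ⊕ (Fin m ⊕ Fin m) → ℝ)

theorem nclKKTMatrix_mulVec_inl (i : Fin n) :
    (nclKKTMatrix K ρ J *ᵥ v) (Sum.inl i) =
      (K *ᵥ (v ∘ Sum.inl) + Jᵀ *ᵥ (v ∘ Sum.inr ∘ Sum.inr)) i := by
  simp [nclKKTMatrix, mulVec, dotProduct, Fintype.sum_sum_type]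

theorem nclKKTMatrix_mulVec_inr_inl (i : Fin m) :
    (nclKKTMatrix K ρ J *ᵥ v) (Sum.inr (Sum.inl i)) =
      (ρ • (v ∘ Sum.inr ∘ Sum.inl) + v ∘ Sum.inr ∘ Sum.inr) i := by
  simp [nclKKTMatrix, mulVec, dotProduct, Fintype.sum_sum_type, one_apply]

theorem nclKKTMatrix_mulVec_inr_inr (i : Fin m) :
    (nclKKTMatrix K ρ J *ᵥ v) (Sum.inr (Sum.inr i)) =
      (J *ᵥ (v ∘ Sum.inl) + v ∘ Sum.inr ∘ Sum.inl) i := by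
  simp [nclKKTMatrix, mulVec, dotProduct, Fintype.sum_sum_type, one_apply]

end nclKKTMatrix

/-- If `K` is symmetric positive definite and `ρ > 0`, then for any
m×n matrix `J`, the block matrix `M = [[K, 0, Jᵀ], [0, ρI, I], [J, I, 0]]` is
nonsingular (has trivial kernel). -/
theorem ncl_kkt_matrix_nonsingular
    {n m : ℕ}
    (K : Matrix (Fin n) (Fin n) ℝ) (hK : K.PosDef)
    (ρ : ℝ) (hρ : 0 < ρ)
    (J : Matrix (Fin m) (Fin n) ℝ) :
    ∀ v : (Fin n ⊕ (Fin m ⊕ Fin m)) → ℝ,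
      (nclKKTMatrix K ρ J).mulVec v = 0 → v = 0 := by
  intro v hv
  obtain ⟨hx, hr, hl⟩ := kkt_eq_zero_of_posDef hK hρ
    (funext fun i => (nclKKTMatrix_mulVec_inl K ρ J v i).symm.trans (congrFun hv _))
    (funext fun i => (nclKKTMatrix_mulVec_inr_inl K ρ J v i).symm.trans (congrFun hv _))
    (funext fun i => (nclKKTMatrix_mulVec_inr_inr K ρ J v i).symm.trans (congrFun hv _))
  funext p
  rcases p with i | i | i
  · exact congrFun hx i
  · exact congrFun hr i
  · exact congrFun hl i
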